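/- arXiv:0712.0629 — 4 statements merged into one kernel-verified Lean document; each statement's English description precedes it below -/
import Mathlib

section
/- Let N, M, n be positive integers with N = nM, let a be an integer with 0 < a < M, and let τ be a point of the complex upper half-plane ℍ. Then ∏_{k=0}^{n−1} E_{kM+a}^{(N)}(τ) = E_a^{(M)}(τ). -/
open Complex

/-- The second Bernoulli function `B₂(x) = {x}² − {x} + 1/6`. -/
noncomputable def B₂ (x : ℝ) : ℝ := Int.fract x ^ 2 - Int.fract x + 1 / 6

/-- For `0 < a < N`, the Siegel-type function
`E_a^{(N)}(τ) = e^{πiτN·B₂(a/N)} ∏_{n=1}^∞ (1 − q^{(n−1)N+a})(1 − q^{nN−a})`, `q = e^{2πiτ}`.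
(This formula is used to define the function for every integer `a`; only its values for
`0 < a < N` matter.) -/
noncomputable def Eaux (N : ℕ) (a : ℤ) (τ : ℂ) : ℂ :=
  Complex.exp (Real.pi * I * τ * N * B₂ ((a : ℝ) / N)) *
    ∏' n : ℕ,
      (1 - Complex.exp (2 * Real.pi * I * τ * ((n : ℂ) * N + a))) *
        (1 - Complex.exp (2 * Real.pi * I * τ * (((n : ℂ) + 1) * N - a)))

/-- The function `E_a^{(N)}` extended to all integers `a` (not divisible by `N`) via
`E_a^{(N)} = (−1)^{⌊a/N⌋}·E_{a₀}^{(N)}` with `a₀` the representative of `a mod N` in `(0,N)`. -/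
noncomputable def E (N : ℕ) (a : ℤ) (τ : ℂ) : ℂ :=
  (-1 : ℂ) ^ (Int.ediv a N) * Eaux N (Int.emod a N) τ

/-!
For `0 < b < N` the product defining `E_b^{(N)}` splits as
`e^{πiτN·B₂(b/N)} · (q^b; q^N)_∞ · (q^{N-b}; q^N)_∞`. Splitting the index of a q-Pochhammer
product into residue classes mod `n` gives `(c; r)_∞ = ∏_{k<n} (c r^k; r^n)_∞`, which turns the
product over `b = kM + a` of the first factors into `(q^a; q^M)_∞`, and (after `k ↦ n - 1 - k`)
of the second factors into `(q^{M-a}; q^M)_∞`. The exponential prefactors match by the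
distribution relation `∑_{k<n} B₂((x + k)/n) = B₂(x)/n`.
-/

open Finset
open scoped ComplexOrder

lemma B₂_of_mem_Ico {x : ℝ} (hx : x ∈ Set.Ico 0 1) : B₂ x = x ^ 2 - x + 1 / 6 := by
  rw [B₂, Int.fract_eq_self.mpr hx]

lemma sum_range_sq_sub_mul_add (x n : ℝ) (m : ℕ) :
    ∑ k ∈ range m, ((x + k) ^ 2 - n * (x + k) + n ^ 2 / 6) =
      m * x ^ 2 + x * m * (m - 1) + m * (m - 1) * (2 * m - 1) / 6
        - n * (m * x + m * (m - 1) / 2) + m * n ^ 2 / 6 := by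
  induction m with
  | zero => simp
  | succ m ih => rw [sum_range_succ, ih]; push_cast; ring

lemma sum_range_B₂_add_div {x : ℝ} (hx : x ∈ Set.Ico 0 1) {n : ℕ} (hn : 0 < n) :
    ∑ k ∈ range n, B₂ ((x + k) / n) = B₂ x / n := by
  have hn' : (0 : ℝ) < n := by exact_mod_cast hn
  have hmem : ∀ k ∈ range n, (x + k) / n ∈ Set.Ico (0 : ℝ) 1 := by
    intro k hk
    have hk' : (k : ℝ) + 1 ≤ n := by exact_mod_cast mem_range.mp hk
    constructor
    · exact div_nonneg (by linarith [hx.1, k.cast_nonneg (α := ℝ)]) hn'.le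
    · rw [div_lt_one hn']; linarith [hx.2]
  rw [sum_congr rfl fun k hk => B₂_of_mem_Ico (hmem k hk), B₂_of_mem_Ico hx]
  have key := sum_range_sq_sub_mul_add x n n
  have hsum : ∑ k ∈ range n, (((x + k) / n) ^ 2 - (x + k) / n + 1 / 6) =
      (∑ k ∈ range n, ((x + k) ^ 2 - n * (x + k) + n ^ 2 / 6)) / (n : ℝ) ^ 2 := by
    rw [sum_div]
    refine sum_congr rfl fun k _ => ?_
    field_simp
  rw [hsum, key]
  field_simp
  ring

lemma tsum_eq_sum_range_tsum_add_mul {α : Type*} [AddCommGroup α] [UniformSpace α]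
    [IsUniformAddGroup α] [CompleteSpace α] [T0Space α] {f : ℕ → α} (hf : Summable f)
    {n : ℕ} (hn : 0 < n) :
    ∑' j, f j = ∑ k ∈ range n, ∑' m, f (k + n * m) := by
  obtain ⟨n, rfl⟩ := Nat.exists_eq_succ_of_ne_zero hn.ne'
  rw [Nat.sumByResidueClasses hf (n + 1)]
  exact Fin.sum_univ_eq_sum_range (fun k => ∑' m, f (k + (n + 1) * m)) _

/-- The q-Pochhammer symbol `(c; r)_∞`. -/
noncomputable def qPochhammer (c r : ℂ) : ℂ := ∏' j : ℕ, (1 - c * r ^ j)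

section qPochhammer

variable {c r : ℂ}

lemma summable_log_one_sub_mul_pow (hr : ‖r‖ < 1) :
    Summable fun j : ℕ => log (1 - c * r ^ j) := by
  simpa [sub_eq_add_neg] using Complex.summable_log_one_add_of_summable
    ((summable_geometric_of_norm_lt_one hr).mul_left c).neg

lemma norm_mul_pow_lt_one (hc : ‖c‖ < 1) (hr : ‖r‖ ≤ 1) (j : ℕ) : ‖c * r ^ j‖ < 1 := by
  rw [norm_mul, norm_pow]
  exact (mul_le_of_le_one_right (norm_nonneg c) (pow_le_one₀ (norm_nonneg r) hr)).trans_lt hc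

lemma one_sub_mul_pow_ne_zero (hc : ‖c‖ < 1) (hr : ‖r‖ ≤ 1) (j : ℕ) : 1 - c * r ^ j ≠ 0 :=
  sub_ne_zero.mpr fun h => by simpa [← h] using norm_mul_pow_lt_one hc hr j

lemma multipliable_one_sub_mul_pow (hr : ‖r‖ < 1) : Multipliable fun j : ℕ => 1 - c * r ^ j :=
  Complex.multipliable_of_summable_log (summable_log_one_sub_mul_pow hr)

lemma qPochhammer_eq_exp_tsum_log (hc : ‖c‖ < 1) (hr : ‖r‖ < 1) :
    qPochhammer c r = cexp (∑' j : ℕ, log (1 - c * r ^ j)) :=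
  (Complex.cexp_tsum_eq_tprod (one_sub_mul_pow_ne_zero hc hr.le)
    (summable_log_one_sub_mul_pow hr)).symm

lemma qPochhammer_eq_prod_range (hc : ‖c‖ < 1) (hr : ‖r‖ < 1) {n : ℕ} (hn : 0 < n) :
    qPochhammer c r = ∏ k ∈ range n, qPochhammer (c * r ^ k) (r ^ n) := by
  have hrn : ‖r ^ n‖ < 1 := by rw [norm_pow]; exact pow_lt_one₀ (norm_nonneg r) hr hn.ne'
  have hterm : ∀ k m, log (1 - c * r ^ (k + n * m)) = log (1 - c * r ^ k * (r ^ n) ^ m) :=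
    fun k m => by rw [pow_add, pow_mul, mul_assoc]
  rw [qPochhammer_eq_exp_tsum_log hc hr, tsum_eq_sum_range_tsum_add_mul
    (summable_log_one_sub_mul_pow hr) hn, Complex.exp_sum]
  refine prod_congr rfl fun k _ => ?_
  rw [qPochhammer_eq_exp_tsum_log (norm_mul_pow_lt_one hc hr.le k) hrn]
  simp only [hterm]

end qPochhammer

/-- `qpow τ x = q ^ x` for the nome `q = e^{2πiτ}`. -/
noncomputable def qpow (τ x : ℂ) : ℂ := cexp (2 * Real.pi * I * τ * x)

lemma qpow_add (τ x y : ℂ) : qpow τ (x + y) = qpow τ x * qpow τ y := by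
  rw [qpow, qpow, qpow, ← Complex.exp_add]; ring_nf

lemma qpow_natCast_mul (τ x : ℂ) (m : ℕ) : qpow τ (m * x) = qpow τ x ^ m := by
  rw [qpow, qpow, ← Complex.exp_nat_mul]; ring_nf

lemma norm_qpow_lt_one (τ : UpperHalfPlane) {x : ℂ} (hx : 0 < x) : ‖qpow τ x‖ < 1 := by
  obtain ⟨hre, him⟩ := Complex.pos_iff.mp hx
  rw [qpow, Complex.norm_exp, Real.exp_lt_one_iff]
  have hre' : (2 * Real.pi * I * τ * x).re = -(2 * Real.pi * (τ.im * x.re)) := by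
    simp [Complex.mul_re, Complex.mul_im, ← him]; ring
  rw [hre', neg_lt_zero]
  exact mul_pos Real.two_pi_pos (mul_pos τ.im_pos hre)

lemma E_of_nonneg_of_lt {N : ℕ} {a : ℤ} (h0 : 0 ≤ a) (h1 : a < N) (τ : ℂ) :
    E N a τ = Eaux N a τ := by
  rw [E, show a.ediv N = 0 from Int.ediv_eq_zero_of_lt h0 h1,
    show a.emod N = a from Int.emod_eq_of_lt h0 h1, zpow_zero, one_mul]

lemma Eaux_eq_exp_mul_qPochhammer (τ : UpperHalfPlane) {N : ℕ} {b : ℤ} (h0 : 0 < b) (h1 : b < N) :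
    Eaux N b τ = cexp (Real.pi * I * τ * N * B₂ ((b : ℝ) / N)) *
      (qPochhammer (qpow τ b) (qpow τ N) * qPochhammer (qpow τ (N - b)) (qpow τ N)) := by
  have hN : ‖qpow τ N‖ < 1 := norm_qpow_lt_one τ (by exact_mod_cast (h0.trans h1))
  rw [Eaux, qPochhammer, qPochhammer, ← (multipliable_one_sub_mul_pow hN).tprod_mul
    (multipliable_one_sub_mul_pow hN)]
  congr 2 with m
  rw [← qpow_natCast_mul, ← qpow_add, ← qpow_add]
  simp only [qpow]
  ring_nf

lemma prod_range_qPochhammer_qpow (τ : UpperHalfPlane) {b : ℂ} (hb : 0 < b) {M n : ℕ}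
    (hM : 0 < M) (hn : 0 < n) :
    ∏ k ∈ range n, qPochhammer (qpow τ (k * M + b)) (qpow τ (n * M)) =
      qPochhammer (qpow τ b) (qpow τ M) := by
  rw [qPochhammer_eq_prod_range (norm_qpow_lt_one τ hb)
    (norm_qpow_lt_one τ (by exact_mod_cast hM)) hn]
  refine prod_congr rfl fun k _ => ?_
  rw [← qpow_natCast_mul, ← qpow_natCast_mul, ← qpow_add]
  ring_nf

lemma sum_range_mul_B₂_div {M n : ℕ} (hM : 0 < M) (hn : 0 < n) {a : ℝ}
    (ha : a ∈ Set.Ico 0 (M : ℝ)) :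
    ((n * M : ℕ) : ℝ) * ∑ k ∈ range n, B₂ ((k * M + a) / (n * M : ℕ)) = M * B₂ (a / M) := by
  have hM' : (0 : ℝ) < M := by exact_mod_cast hM
  have hx : a / M ∈ Set.Ico (0 : ℝ) 1 :=
    ⟨div_nonneg ha.1 hM'.le, (div_lt_one hM').mpr ha.2⟩
  have hn' : (n : ℝ) ≠ 0 := by exact_mod_cast hn.ne'
  have harg : ∀ k : ℕ, ((k : ℝ) * M + a) / (n * M : ℕ) = (a / M + k) / n := fun k => by
    push_cast; field_simp; ring
  simp only [harg, sum_range_B₂_add_div hx hn]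
  push_cast
  field_simp

theorem distribution_relation_E_general (N M n : ℕ) (hM : 0 < M) (hn : 0 < n)
    (hNnM : N = n * M) (a : ℤ) (ha : 0 < a) (ha' : a < M) (τ : UpperHalfPlane) :
    ∏ k ∈ Finset.range n, E N ((k : ℤ) * M + a) (τ : ℂ) = E M a (τ : ℂ) := by
  subst hNnM
  have hb : ∀ k ∈ range n, 0 < (k : ℤ) * M + a ∧ (k : ℤ) * M + a < (n * M : ℕ) := fun k hk => by
    have hk : (k : ℤ) + 1 ≤ n := by exact_mod_cast mem_range.mp hk
    constructor
    · positivity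
    · push_cast; nlinarith
  rw [prod_congr rfl fun k hk => (E_of_nonneg_of_lt (hb k hk).1.le (hb k hk).2 τ).trans
      (Eaux_eq_exp_mul_qPochhammer τ (hb k hk).1 (hb k hk).2),
    E_of_nonneg_of_lt ha.le ha' τ, Eaux_eq_exp_mul_qPochhammer τ ha ha',
    prod_mul_distrib, prod_mul_distrib, ← Complex.exp_sum]
  congr 2
  · have h := sum_range_mul_B₂_div hM hn (a := a) ⟨by exact_mod_cast ha.le, by exact_mod_cast ha'⟩
    simp only [mul_assoc, ← mul_sum]
    exact_mod_cast congrArg (fun x : ℝ => (Real.pi : ℂ) * (I * (τ * x))) h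
  · push_cast
    exact prod_range_qPochhammer_qpow τ (by exact_mod_cast ha) hM hn
  · rw [← prod_range_reflect, ← prod_range_qPochhammer_qpow τ (b := M - a)
      (by rw [sub_pos]; exact_mod_cast ha') hM hn]
    refine prod_congr rfl fun k hk => ?_
    have hk : 1 + k ≤ n := by rw [add_comm]; exact mem_range.mp hk
    push_cast [Nat.sub_sub, Nat.cast_sub hk]
    ring_nf

/-- **Distribution relation for the functions `E_a^{(N)}`.** If `N = n·M`, `0 < a < M` and
`τ ∈ ℍ`, then `∏_{k=0}^{n−1} E_{kM+a}^{(N)}(τ) = E_a^{(M)}(τ)`. -/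
theorem distribution_relation_E (N M n : ℕ) (hN : 0 < N) (hM : 0 < M) (hn : 0 < n)
    (hNnM : N = n * M) (a : ℤ) (ha : 0 < a) (ha' : a < M) (τ : UpperHalfPlane) :
    ∏ k ∈ Finset.range n, E N ((k : ℤ) * M + a) (τ : ℂ) = E M a (τ : ℂ) :=
  distribution_relation_E_general N M n hM hn hNnM a ha ha' τ
end

section
/- Let n ≥ 2 be an integer and let Λ ⊆ ℝⁿ be the additive subgroup generated by the n−1 vectors e_i − e_{i+1} (i = 1,…,n−1), where e_1,…,e_n is the standard basis; equivalently, Λ is the set of integer vectors whose coordinates sum to 0. Let v_1,…,v_{n−1} ∈ Λ be vectors that are linearly independent over ℚ and let Λ' be the additive subgroup they generate. Let v_n = (c_1,…,c_n) ∈ ℝⁿ with c_1 + ⋯ + c_n ≠ 0, and let M be the n×n real matrix whose i-th row is v_i (i = 1,…,n). Then Λ' has finite index in Λ and the index [Λ : Λ'] equals |det M| / |c_1 + ⋯ + c_n|. -/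
/-- The lattice `Λ ⊆ ℝⁿ` generated by the vectors `eᵢ − eᵢ₊₁`: equivalently, the additive
subgroup of integer vectors whose coordinates sum to `0`. -/
def sumZeroIntLattice (n : ℕ) : AddSubgroup (Fin n → ℝ) where
  carrier := {x | (∀ i, ∃ m : ℤ, x i = m) ∧ ∑ i, x i = 0}
  zero_mem' := ⟨fun i => ⟨0, by simp⟩, by simp⟩
  add_mem' := by
    rintro x y ⟨hx, hsx⟩ ⟨hy, hsy⟩
    refine ⟨fun i => ?_, ?_⟩
    · obtain ⟨m, hm⟩ := hx i
      obtain ⟨m', hm'⟩ := hy i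
      exact ⟨m + m', by simp [Pi.add_apply, hm, hm']⟩
    · simp [Pi.add_apply, Finset.sum_add_distrib, hsx, hsy]
  neg_mem' := by
    rintro x ⟨hx, hsx⟩
    refine ⟨fun i => ?_, ?_⟩
    · obtain ⟨m, hm⟩ := hx i
      exact ⟨-m, by simp [hm]⟩
    · simp [hsx]


/-!
Dropping the last coordinate identifies `Λ` with `ℤⁿ⁻¹`, so by the Smith normal form
(`AddSubgroup.relIndex_eq_natAbs_det`) the index `[Λ : Λ']` is `|det W|`, where `W` is the
matrix of the first `n - 1` coordinates of the `vᵢ`. Adding all columns of `M` to the last one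
does not change `det M` and, since the rows `vᵢ` have coordinate sum `0`, turns the last column
into `(0, …, 0, ∑ cᵢ)`; expanding along it gives `det M = (∑ cᵢ) · det W`.
-/

theorem Matrix.det_eq_sum_last_row_mul_det_submatrix_castSucc {R : Type*} [CommRing R] {k : ℕ}
    (M : Matrix (Fin (k + 1)) (Fin (k + 1)) R) (hrow : ∀ i : Fin k, ∑ j, M i.castSucc j = 0) :
    M.det = (∑ j, M (Fin.last k) j) * (M.submatrix Fin.castSucc Fin.castSucc).det := by
  have h := M.det_updateCol_sum (Fin.last k) 1
  simp only [Pi.one_apply, one_smul] at h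
  rw [← h, Matrix.det_succ_column _ (Fin.last k), Fin.sum_univ_castSucc]
  simp only [Matrix.submatrix_updateCol_succAbove]
  simp [hrow, Fin.succAbove_last]

lemma intCast_floor_of_mem_sumZeroIntLattice {n : ℕ} {x : Fin n → ℝ}
    (hx : x ∈ sumZeroIntLattice n) (i : Fin n) : (⌊x i⌋ : ℝ) = x i := by
  obtain ⟨m, hm⟩ := hx.1 i
  rw [hm, Int.floor_intCast]

lemma apply_last_of_mem_sumZeroIntLattice {k : ℕ} {x : Fin (k + 1) → ℝ}
    (hx : x ∈ sumZeroIntLattice (k + 1)) : x (Fin.last k) = -∑ j : Fin k, x j.castSucc := by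
  have := hx.2
  rw [Fin.sum_univ_castSucc] at this
  linarith

lemma snoc_mem_sumZeroIntLattice {k : ℕ} (m : Fin k → ℤ) :
    Fin.snoc (fun j => (m j : ℝ)) (-∑ j, (m j : ℝ)) ∈ sumZeroIntLattice (k + 1) := by
  refine ⟨Fin.lastCases ⟨-∑ j, m j, by simp⟩ fun j => ⟨m j, by simp⟩, ?_⟩
  simp [Fin.sum_univ_castSucc]

noncomputable def sumZeroIntLatticeEquiv (k : ℕ) :
    (Fin k → ℤ) ≃+ (sumZeroIntLattice (k + 1)).toIntSubmodule where
  toFun m := ⟨_, snoc_mem_sumZeroIntLattice m⟩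
  invFun x := fun j => ⌊(x : Fin (k + 1) → ℝ) j.castSucc⌋
  left_inv m := by ext j; simp
  right_inv x := by
    ext i
    induction i using Fin.lastCases with
    | last =>
      simp [intCast_floor_of_mem_sumZeroIntLattice x.2, apply_last_of_mem_sumZeroIntLattice x.2]
    | cast j => simp [intCast_floor_of_mem_sumZeroIntLattice x.2]
  map_add' m m' := by
    ext i
    induction i using Fin.lastCases with
    | last => simp [Finset.sum_add_distrib, add_comm]
    | cast j => simp

noncomputable def sumZeroIntLatticeBasis (k : ℕ) :
    Module.Basis (Fin k) ℤ (sumZeroIntLattice (k + 1)).toIntSubmodule :=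
  (Pi.basisFun ℤ (Fin k)).map (sumZeroIntLatticeEquiv k).toIntLinearEquiv

lemma intCast_sumZeroIntLatticeBasis_repr {k : ℕ}
    (x : (sumZeroIntLattice (k + 1)).toIntSubmodule) (j : Fin k) :
    ((sumZeroIntLatticeBasis k).repr x j : ℝ) = (x : Fin (k + 1) → ℝ) j.castSucc := by
  simp [sumZeroIntLatticeBasis, sumZeroIntLatticeEquiv, intCast_floor_of_mem_sumZeroIntLattice x.2]

theorem Module.Basis.det_ne_zero_of_linearIndependent {R M ι : Type*} [CommRing R] [IsDomain R]
    [AddCommGroup M] [Module R M] [Fintype ι] [DecidableEq ι] (b : Module.Basis ι R M)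
    {w : ι → M} (hw : LinearIndependent R w) : b.det w ≠ 0 := by
  rw [b.det_apply]
  intro h
  obtain ⟨z, hz0, hz⟩ := Matrix.exists_mulVec_eq_zero_iff.mpr h
  refine hz0 (funext (Fintype.linearIndependent_iff.mp hw z (b.ext_elem fun i => ?_)))
  simpa [Matrix.mulVec, dotProduct, Module.Basis.toMatrix_apply, mul_comm] using congrFun hz i

theorem relIndex_closure_range_sumZeroIntLattice {k : ℕ} (v : Fin k → Fin (k + 1) → ℝ)
    (hv : ∀ i, v i ∈ sumZeroIntLattice (k + 1)) (hli : LinearIndependent ℤ v) :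
    (AddSubgroup.closure (Set.range v)).relIndex (sumZeroIntLattice (k + 1)) ≠ 0 ∧
      ((AddSubgroup.closure (Set.range v)).relIndex (sumZeroIntLattice (k + 1)) : ℝ) =
        |(Matrix.of fun i j => v i j.castSucc).det| := by
  have hle : AddSubgroup.closure (Set.range v) ≤ sumZeroIntLattice (k + 1) :=
    (AddSubgroup.closure_le _).mpr (Set.range_subset_iff.mpr hv)
  let b : Module.Basis (Fin k) ℤ (AddSubgroup.closure (Set.range v)).toIntSubmodule :=
    (Module.Basis.span hli).map (LinearEquiv.ofEq _ _ (AddSubgroup.toIntSubmodule_closure _).symm)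
  let w : Fin k → (sumZeroIntLattice (k + 1)).toIntSubmodule := fun i => ⟨v i, hv i⟩
  have hw : (fun i => ⟨b i, hle (SetLike.coe_mem _)⟩) = w := by
    funext i
    simp [b, w, Module.Basis.span_apply]
  have hindex := AddSubgroup.relIndex_eq_natAbs_det _ _ hle b (sumZeroIntLatticeBasis k)
  rw [hw] at hindex
  have hdet :
      ((sumZeroIntLatticeBasis k).det w : ℝ) = (Matrix.of fun i j => v i j.castSucc).det := by
    rw [Module.Basis.det_apply, ← Matrix.det_transpose, Int.cast_det]
    congr 1
    ext i j
    simp [Module.Basis.toMatrix_apply, intCast_sumZeroIntLatticeBasis_repr, w]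
  have hw_li : LinearIndependent ℤ w :=
    LinearIndependent.of_comp (sumZeroIntLattice (k + 1)).toIntSubmodule.subtype hli
  refine ⟨?_, ?_⟩
  · rw [hindex, Int.natAbs_ne_zero]
    exact (sumZeroIntLatticeBasis k).det_ne_zero_of_linearIndependent hw_li
  · rw [hindex, Nat.cast_natAbs, Int.cast_abs, hdet]

theorem lattice_index_formula_general (n : ℕ)
    (v : Fin (n - 1) → (Fin n → ℝ)) (hv : ∀ i, v i ∈ sumZeroIntLattice n)
    (hli : LinearIndependent ℚ v)
    (c : Fin n → ℝ) (hc : ∑ i, c i ≠ 0)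
    (M : Matrix (Fin n) (Fin n) ℝ)
    (hMv : ∀ (i : Fin n) (h : (i : ℕ) < n - 1), M i = v ⟨i, h⟩)
    (hMc : ∀ i : Fin n, ¬ ((i : ℕ) < n - 1) → M i = c) :
    ((AddSubgroup.closure (Set.range v)).addSubgroupOf (sumZeroIntLattice n)).index ≠ 0 ∧
      (((AddSubgroup.closure (Set.range v)).addSubgroupOf (sumZeroIntLattice n)).index : ℝ) =
        |M.det| / |∑ i, c i| := by
  obtain ⟨k, rfl⟩ : ∃ k, n = k + 1 :=
    Nat.exists_eq_succ_of_ne_zero (by rintro rfl; simp at hc)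
  have hrows (i : Fin k) : M i.castSucc = v i := hMv i.castSucc i.isLt
  have hminor :
      M.submatrix Fin.castSucc Fin.castSucc = Matrix.of fun (i : Fin k) j => v i j.castSucc := by
    ext i j
    simp [hrows]
  have hdet : M.det = (∑ i, c i) * (Matrix.of fun (i : Fin k) j => v i j.castSucc).det := by
    rw [M.det_eq_sum_last_row_mul_det_submatrix_castSucc fun i => by rw [hrows]; exact (hv i).2,
      hMc (Fin.last k) (by simp), hminor]
  obtain ⟨hne, hindex⟩ :=
    relIndex_closure_range_sumZeroIntLattice (k := k) v hv (hli.restrict_scalars' ℤ)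
  refine ⟨hne, ?_⟩
  rw [AddSubgroup.relIndex] at hindex
  rw [hindex, hdet, abs_mul, mul_div_cancel_left₀ _ (abs_ne_zero.mpr hc)]

/-- **Lattice index lemma.** Let `Λ ⊆ ℝⁿ` be the lattice of integer vectors with coordinate
sum `0` (generated by the `eᵢ − eᵢ₊₁`), let `Λ'` be the sublattice generated by vectors
`v₁, …, v_{n−1} ∈ Λ` that are linearly independent over `ℚ`, and let `M` be the `n × n`
matrix whose first `n−1` rows are the `vᵢ` and whose last row is a vector `c` with
`∑ᵢ cᵢ ≠ 0`. Then `Λ'` has finite index in `Λ` equal to `|det M| / |∑ᵢ cᵢ|`. -/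
theorem lattice_index_formula (n : ℕ) (hn : 2 ≤ n)
    (v : Fin (n - 1) → (Fin n → ℝ)) (hv : ∀ i, v i ∈ sumZeroIntLattice n)
    (hli : LinearIndependent ℚ v)
    (c : Fin n → ℝ) (hc : ∑ i, c i ≠ 0)
    (M : Matrix (Fin n) (Fin n) ℝ)
    (hMv : ∀ (i : Fin n) (h : (i : ℕ) < n - 1), M i = v ⟨i, h⟩)
    (hMc : ∀ i : Fin n, ¬ ((i : ℕ) < n - 1) → M i = c) :
    ((AddSubgroup.closure (Set.range v)).addSubgroupOf (sumZeroIntLattice n)).index ≠ 0 ∧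
      (((AddSubgroup.closure (Set.range v)).addSubgroupOf (sumZeroIntLattice n)).index : ℝ) =
        |M.det| / |∑ i, c i| :=
  lattice_index_formula_general n v hv hli c hc M hMv hMc
end

section
/- Let N ≥ 4 be an integer and let G = (ℤ/Nℤ)ˣ/±1 be the quotient of the unit group of ℤ/Nℤ by the subgroup {±1}. Define f : G → ℚ by f([a]) = (N/2)·B₂({a/N}) for any integer representative a of the class [a]; this is well defined since B₂({−x}) = B₂({x}). Let M be the G×G matrix with entry M(x,y) = f(x·y⁻¹). Then det M = ∏_χ (1/4)·B_{2,χ}, where the product ranges over all even Dirichlet characters χ modulo N (χ even meaning χ(−1) = 1). -/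
open scoped Classical

/-- The generalized Bernoulli number `B_{2,χ} = N·∑_{a=1}^{N} χ(a)·B₂(a/N)` of a Dirichlet
character `χ` modulo `N`. -/
noncomputable def B2chi {N : ℕ} (χ : DirichletCharacter ℂ N) : ℂ :=
  (N : ℂ) * ∑ a ∈ Finset.Icc 1 N, χ (a : ZMod N) * ((B₂ ((a : ℝ) / N) : ℝ) : ℂ)

/-- The group `(ℤ/Nℤ)ˣ/±1`. -/
abbrev unitsModPM (N : ℕ) : Type :=
  (ZMod N)ˣ ⧸ Subgroup.zpowers (-1 : (ZMod N)ˣ)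

noncomputable instance (N : ℕ) [NeZero N] : Fintype (unitsModPM N) :=
  Fintype.ofFinite _

/-! The matrix `f (x * y⁻¹)` is the group matrix of `f` on the finite abelian group
`G = (ℤ/Nℤ)ˣ/±1`. Each character `ψ` of `G` is a left eigenvector with eigenvalue
`∑ g, ψ g * f g`, and the characters are linearly independent (Dedekind), so the determinant is
the product of these eigenvalues. The characters of `G` are exactly the even Dirichlet characters
`χ` mod `N`; as `a` and `-a` have the same class, each eigenvalue is
`½ ∑_{a ∈ (ℤ/Nℤ)ˣ} χ a * f [a] = ¼ B_{2,χ}`. -/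

open Finset

section GroupDeterminant

variable {G K : Type*} [CommGroup G] [Fintype G] [Field K]

theorem MonoidHom.sum_mul_apply_mul_inv (ψ : G →* Kˣ) (f : G → K) (y : G) :
    ∑ x, (ψ x : K) * f (x * y⁻¹) = (∑ g, (ψ g : K) * f g) * ψ y := by
  rw [sum_mul]
  refine Fintype.sum_equiv (Equiv.mulRight y⁻¹) _ _ fun x => ?_
  rw [Equiv.coe_mulRight, mul_right_comm, ← Units.val_mul, ← map_mul, inv_mul_cancel_right]

theorem Matrix.det_eq_prod_sum_monoidHom [DecidableEq G]
    [HasEnoughRootsOfUnity K (Monoid.exponent G)] [Fintype (G →* Kˣ)]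
    (f : G → K) {M : Matrix G G K} (hM : ∀ x y, M x y = f (x * y⁻¹)) :
    M.det = ∏ ψ : G →* Kˣ, ∑ g, (ψ g : K) * f g := by
  obtain ⟨e⟩ := CommGroup.monoidHom_mulEquiv_of_hasEnoughRootsOfUnity G K
  let U : Matrix G G K := .of fun i y => e.symm i y
  have hU : U.det ≠ 0 := by
    have hinj : Function.Injective fun i => (Units.coeHom K).comp (e.symm i) :=
      fun i j hij => e.symm.injective <| MonoidHom.ext fun y =>
        Units.ext (DFunLike.congr_fun hij y)
    refine (Matrix.isUnit_iff_isUnit_det U).mp ?_ |>.ne_zero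
    exact Matrix.linearIndependent_rows_iff_isUnit.mp
      ((linearIndependent_monoidHom G K).comp _ hinj)
  have hUM : U * M = Matrix.diagonal (fun i => ∑ g, (e.symm i g : K) * f g) * U := by
    ext i y
    rw [Matrix.diagonal_mul, Matrix.mul_apply]
    simp only [hM, U, Matrix.of_apply, MonoidHom.sum_mul_apply_mul_inv]
  have hdet : U.det * M.det = U.det * ∏ i, ∑ g, (e.symm i g : K) * f g := by
    rw [← Matrix.det_mul, hUM, Matrix.det_mul, Matrix.det_diagonal, mul_comm]
  rw [mul_left_cancel₀ hU hdet]
  exact e.symm.toEquiv.prod_comp fun ψ => ∑ g, (ψ g : K) * f g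

end GroupDeterminant

theorem QuotientGroup.sum_comp_mk {G M : Type*} [Group G] [Fintype G] [AddCommMonoid M]
    (H : Subgroup G) [Fintype (G ⧸ H)] (h : G ⧸ H → M) :
    ∑ a : G, h a = Nat.card H • ∑ x : G ⧸ H, h x := by
  classical
  rw [← Fintype.sum_fiberwise (QuotientGroup.mk : G → G ⧸ H), smul_sum]
  refine sum_congr rfl fun x _ => ?_
  rw [sum_congr rfl fun i _ => congrArg h i.2, sum_const, card_univ, ← Nat.card_eq_fintype_card]
  congr 1
  exact (QuotientGroup.card_preimage_mk H {x}).trans (by simp)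

theorem ZMod.card_zpowers_neg_one {N : ℕ} (hN : 2 < N) :
    Nat.card (Subgroup.zpowers (-1 : (ZMod N)ˣ)) = 2 := by
  have : Fact (1 < N) := ⟨by omega⟩
  rw [Nat.card_zpowers, ← orderOf_units, Units.coe_neg_one, orderOf_neg_one,
    ZMod.ringChar_zmod_n, if_neg hN.ne']

def QuotientGroup.kerLEMonoidHomEquiv {G M : Type*} [Group G] [Monoid M] (H : Subgroup G)
    [H.Normal] : {φ : G →* M // H ≤ φ.ker} ≃ (G ⧸ H →* M) where
  toFun φ := QuotientGroup.lift H φ.1 φ.2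
  invFun ψ := ⟨ψ.comp (QuotientGroup.mk' H), fun h hh => by
    rw [MonoidHom.mem_ker, MonoidHom.comp_apply, QuotientGroup.mk'_apply,
      (QuotientGroup.eq_one_iff h).mpr hh, map_one]⟩
  left_inv φ := rfl
  right_inv ψ := QuotientGroup.monoidHom_ext H rfl

noncomputable def DirichletCharacter.evenEquiv (R : Type*) [CommRing R] (N : ℕ) :
    {χ : DirichletCharacter R N // χ.Even} ≃ (unitsModPM N →* Rˣ) :=
  (MulChar.equivToUnitHom.subtypeEquiv fun χ => by
    rw [Subgroup.zpowers_le, MonoidHom.mem_ker, Units.ext_iff]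
    rfl).trans (QuotientGroup.kerLEMonoidHomEquiv _)

theorem DirichletCharacter.evenEquiv_mk {R : Type*} [CommRing R] {N : ℕ}
    (χ : {χ : DirichletCharacter R N // χ.Even}) (a : (ZMod N)ˣ) :
    (evenEquiv R N χ (a : unitsModPM N) : R) = χ.1 a :=
  rfl

theorem B₂_fract (x : ℝ) : B₂ (Int.fract x) = B₂ x := by
  rw [B₂, B₂, Int.fract_fract]

theorem B₂_val_natCast_div (N a : ℕ) : B₂ (((a : ZMod N).val : ℝ) / N) = B₂ (a / N) := by
  rw [ZMod.val_natCast, ← Int.fract_div_natCast_eq_div_natCast_mod, B₂_fract]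

theorem ZMod.sum_Icc_one_natCast {N : ℕ} [NeZero N] {M : Type*} [AddCommMonoid M]
    (F : ZMod N → M) : ∑ a ∈ Icc 1 N, F a = ∑ b : ZMod N, F b := by
  refine sum_nbij' (↑) (fun b => if b = 0 then N else b.val) (by simp) (fun b _ => ?_)
    (fun a ha => ?_) (fun b _ => ?_) (fun _ _ => rfl)
  · rw [mem_Icc]
    split_ifs with hb
    · exact ⟨NeZero.one_le, le_rfl⟩
    · exact ⟨ZMod.val_pos.mpr hb, (ZMod.val_lt b).le⟩
  · obtain ⟨h1, h2⟩ := mem_Icc.mp ha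
    rcases h2.lt_or_eq with hlt | rfl
    · have hval := ZMod.val_cast_of_lt hlt
      rw [if_neg fun h0 => by rw [h0, ZMod.val_zero] at hval; omega, hval]
    · simp
  · split_ifs with hb <;> simp [hb]

theorem MulChar.sum_mul_eq_sum_units {R R' : Type*} [CommMonoid R] [Fintype R] [Fintype Rˣ]
    [CommSemiring R'] (χ : MulChar R R') (g : R → R') :
    ∑ a, χ a * g a = ∑ u : Rˣ, χ u * g u := by
  refine (sum_subset (subset_univ _) fun a _ ha => ?_).symm.trans
    (sum_map univ ⟨Units.val, Units.val_injective⟩ fun a => χ a * g a)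
  have : ¬IsUnit a := fun hu => ha (mem_map_of_mem _ (mem_univ hu.unit))
  rw [χ.map_nonunit this, zero_mul]

theorem B2chi_eq_sum_units {N : ℕ} [NeZero N] (χ : DirichletCharacter ℂ N) :
    B2chi χ = N * ∑ u : (ZMod N)ˣ, χ u * (B₂ (((u : ZMod N).val : ℝ) / N) : ℂ) := by
  rw [B2chi, ← χ.sum_mul_eq_sum_units fun b => ((B₂ (b.val / N) : ℝ) : ℂ),
    ← ZMod.sum_Icc_one_natCast]
  simp only [B₂_val_natCast_div]

theorem sum_evenEquiv_mul_eq_B2chi {N : ℕ} [NeZero N] (hN : 2 < N) {f : unitsModPM N → ℝ}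
    (hf : ∀ a : (ZMod N)ˣ,
      f (QuotientGroup.mk a) = ((N : ℝ) / 2) * B₂ (((a : ZMod N).val : ℝ) / N))
    (χ : {χ : DirichletCharacter ℂ N // χ.Even}) :
    ∑ g, (DirichletCharacter.evenEquiv ℂ N χ g : ℂ) * f g = 1 / 4 * B2chi χ.1 := by
  have hfib := QuotientGroup.sum_comp_mk (Subgroup.zpowers (-1 : (ZMod N)ˣ))
    fun g => (DirichletCharacter.evenEquiv ℂ N χ g : ℂ) * f g
  rw [ZMod.card_zpowers_neg_one hN] at hfib
  simp only [DirichletCharacter.evenEquiv_mk, hf, nsmul_eq_mul] at hfib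
  push_cast at hfib
  simp only [mul_left_comm _ ((N : ℂ) / 2), ← mul_sum] at hfib
  rw [B2chi_eq_sum_units]
  linear_combination (-1 / 2 : ℂ) * hfib

/-- **Determinant of the Bernoulli matrix.** Let `N ≥ 4`, `G = (ℤ/Nℤ)ˣ/±1`, and let
`f : G → ℝ` be the (well-defined) function `f([a]) = (N/2)·B₂({a/N})`. Then the `G × G`
matrix `M` with `M(x,y) = f(x·y⁻¹)` has determinant `∏_χ (1/4)·B_{2,χ}`, the product being
over all even Dirichlet characters `χ` modulo `N`. -/
theorem det_bernoulli_matrix (N : ℕ) [NeZero N] (hN : 4 ≤ N)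
    (f : unitsModPM N → ℝ)
    (hf : ∀ a : (ZMod N)ˣ,
      f (QuotientGroup.mk a) = ((N : ℝ) / 2) * B₂ (((a : ZMod N).val : ℝ) / N))
    (M : Matrix (unitsModPM N) (unitsModPM N) ℝ)
    (hM : ∀ x y : unitsModPM N, M x y = f (x * y⁻¹)) :
    (M.det : ℂ) =
      ∏ χ ∈ Finset.univ.filter (fun χ : DirichletCharacter ℂ N => χ (-1) = 1),
        (1 / 4 : ℂ) * B2chi χ := by
  have : NeZero (Monoid.exponent (unitsModPM N)) :=
    ⟨Monoid.exponent_ne_zero_of_finite (G := unitsModPM N)⟩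
  have := Fintype.ofFinite (unitsModPM N →* ℂˣ)
  have hdet : (M.det : ℂ) = ∏ ψ : unitsModPM N →* ℂˣ, ∑ g, (ψ g : ℂ) * f g := by
    rw [← Complex.ofRealHom_eq_coe, RingHom.map_det]
    refine Matrix.det_eq_prod_sum_monoidHom (fun g => (f g : ℂ)) fun x y => ?_
    simp [hM]
  rw [hdet, prod_subtype _ (p := DirichletCharacter.Even) (by simp [DirichletCharacter.Even]),
    ← (DirichletCharacter.evenEquiv ℂ N).prod_comp]
  exact Fintype.prod_congr _ _ (sum_evenEquiv_mul_eq_B2chi (by omega) hf)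
end

section
/- Let M be a positive integer with at least two distinct prime divisors, let p_1,…,p_j be distinct primes such that p_i² | M for each i, and let g be an integer coprime to M. Then the map (m_1,…,m_j) ↦ [g + m_1·M/p_1 + ⋯ + m_j·M/p_j] ∈ (ℤ/Mℤ)/±1, defined for integer tuples with 0 ≤ m_i ≤ p_i − 1, is injective, and its image is exactly the orbit O_{g, p_1⋯p_j} = {h ∈ ℤ/Mℤ : h ≡ ±g (mod M/(p_1⋯p_j))}/±1. -/
/-!
Put `K = p₁⋯p_j` and `N = M/K`. Since the `p_i²` are pairwise coprime divisors of `M`,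
`K ∣ N` and `M/p_i = N·∏_{i'≠i} p_{i'}`; so the class attached to `m` is `[g + N·t]` with
`t = ∑ m_i ∏_{i'≠i} p_{i'}`, which lies in `O_{g,K}` because `N·K = M`.
If `[g + N·t] = [g + N·t']`, then either `t ≡ t' (mod K)`, and reducing modulo each `p_i`
(where only the `i`-th summand survives, with a cofactor prime to `p_i`) gives `m = m'`;
or `2g ≡ 0 (mod N)`, so `N ∣ 2` as `g` is prime to `N`, and then `M = N·K ∣ 4` has a single
prime factor. Injectivity yields `K` distinct classes inside an orbit of at most `K` elements.
-/

open scoped Classical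

/-- The setoid on `ℤ/Mℤ` identifying `x` with `−x`. -/
def negSetoid (M : ℕ) : Setoid (ZMod M) where
  r x y := x = y ∨ x = -y
  iseqv := by
    constructor
    · intro x; exact Or.inl rfl
    · rintro x y (rfl | rfl)
      · exact Or.inl rfl
      · exact Or.inr (neg_neg _).symm
    · rintro x y z (rfl | rfl) (rfl | rfl)
      · exact Or.inl rfl
      · exact Or.inr rfl
      · exact Or.inr rfl
      · exact Or.inl (neg_neg _)

/-- The quotient `(ℤ/Mℤ)/±1` of `ℤ/Mℤ` by the involution `x ↦ −x`. -/
abbrev ZModPM (M : ℕ) : Type := Quotient (negSetoid M)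

/-- The class `[x] ∈ (ℤ/Mℤ)/±1` of `x ∈ ℤ/Mℤ`. -/
def mkPM (M : ℕ) (x : ZMod M) : ZModPM M := Quotient.mk (negSetoid M) x

/-- For `a ∈ ℤ/Mℤ` and a divisor `K` of `M`, the orbit `O_{a,K}`: the image in
`(ℤ/Mℤ)/±1` of the set `{a + k·M/K : k = 0, 1, …, K−1}`. -/
noncomputable def orbitPM (M : ℕ) (a : ZMod M) (K : ℕ) : Finset (ZModPM M) :=
  (Finset.range K).image (fun k => mkPM M (a + (k : ZMod M) * ((M / K : ℕ) : ZMod M)))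

open Finset Function

lemma Nat.prod_dvd_of_coprime {ι : Type*} [Fintype ι] {s : ι → ℕ} {z : ℕ}
    (hs : Pairwise (Nat.Coprime on s)) (hz : ∀ i, s i ∣ z) : ∏ i, s i ∣ z := by
  have := Fintype.prod_dvd_of_coprime (s := fun i => (s i : ℤ)) (z := (z : ℤ))
    (fun _ _ h => Nat.isCoprime_iff_coprime.2 (hs h))
    (fun i => Int.natCast_dvd_natCast.2 (hz i))
  exact_mod_cast this

lemma Nat.card_primeFactors_le_one_of_dvd_prime_pow {q k M : ℕ} (hq : q.Prime) (hk : k ≠ 0)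
    (h : M ∣ q ^ k) : M.primeFactors.card ≤ 1 := by
  calc M.primeFactors.card ≤ (q ^ k).primeFactors.card :=
        card_le_card (Nat.primeFactors_mono h (pow_ne_zero k hq.ne_zero))
    _ = 1 := by rw [Nat.primeFactors_prime_pow hk hq, card_singleton]

lemma range_eq_of_injective_of_card_le {α β : Type*} [Fintype α] [DecidableEq β] {f : α → β}
    {s : Finset β} (hf : Injective f) (hfs : ∀ a, f a ∈ s)
    (hcard : s.card ≤ Fintype.card α) :
    Set.range f = s := by
  have himage : univ.image f = s :=
    eq_of_subset_of_card_le (fun _ hb => (mem_image.1 hb).elim fun a ⟨_, ha⟩ => ha ▸ hfs a)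
      (by rwa [card_image_of_injective _ hf, card_univ])
  rw [← himage, coe_image, coe_univ, Set.image_univ]

lemma two_lt_of_mul_eq_of_dvd {M N K : ℕ} (hM : N * K = M) (hKN : K ∣ N)
    (h : 2 ≤ M.primeFactors.card) : 2 < N := by
  have hM0 : M ≠ 0 := by rintro rfl; simp at h
  by_contra! hN
  have hN2 : N ∣ 2 := by interval_cases N <;> simp_all
  have hM4 : M ∣ 2 ^ 2 := hM ▸ Nat.mul_dvd_mul hN2 (hKN.trans hN2)
  have := Nat.card_primeFactors_le_one_of_dvd_prime_pow Nat.prime_two two_ne_zero hM4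
  omega

lemma modEq_of_add_mul_eq {M N K : ℕ} (hM : N * K = M) (hN : N ≠ 0) {g : ZMod M} {a b : ℕ}
    (h : g + N * a = g + N * b) : a ≡ b [MOD K] := by
  refine Nat.ModEq.mul_left_cancel' hN ?_
  rw [hM, ← ZMod.natCast_eq_natCast_iff]
  push_cast
  exact add_left_cancel h

lemma dvd_two_of_add_mul_eq_neg {M N : ℕ} (hN : N ∣ M) {g : ℤ} (hg : Int.gcd g N = 1)
    {a b : ℕ} (h : (g : ZMod M) + N * a = -(g + N * b)) : N ∣ 2 := by
  have h' := congrArg (ZMod.castHom hN (ZMod N)) h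
  simp only [map_add, map_mul, map_neg, map_intCast, map_natCast, ZMod.natCast_self, zero_mul,
    add_zero] at h'
  have h2g : ((2 * g : ℤ) : ZMod N) = 0 := by push_cast; linear_combination h'
  rw [ZMod.intCast_zmod_eq_zero_iff_dvd] at h2g
  have hcop : IsCoprime (N : ℤ) g := Int.isCoprime_iff_gcd_eq_one.2 (by rwa [Int.gcd_comm])
  exact_mod_cast hcop.dvd_of_dvd_mul_right h2g

lemma mkPM_eq_mkPM_iff {M : ℕ} {x y : ZMod M} : mkPM M x = mkPM M y ↔ x = y ∨ x = -y :=
  Quotient.eq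

/- In `orbitPM` the ascription `(k : ZMod M)` makes `range K` be coerced to `Finset (ZMod M)`
through the monad structure of `Finset`; this removes the coercion. -/
lemma orbitPM_eq_image_range (M : ℕ) (a : ZMod M) (K : ℕ) :
    orbitPM M a K = (range K).image (fun k : ℕ => mkPM M (a + k * (M / K : ℕ))) := by
  ext x
  simp only [orbitPM, mem_image, bind_def, sup_eq_biUnion, mem_biUnion, pure_def,
    mem_singleton, mem_range]
  constructor
  · rintro ⟨_, ⟨k, hk, rfl⟩, rfl⟩
    exact ⟨k, hk, rfl⟩
  · rintro ⟨k, hk, rfl⟩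
    exact ⟨k, ⟨k, hk, rfl⟩, rfl⟩

lemma mkPM_add_mul_mem_orbitPM {M K : ℕ} (hK : 0 < K) (hKM : K ∣ M) (a : ZMod M) (t : ℕ) :
    mkPM M (a + t * (M / K : ℕ)) ∈ orbitPM M a K := by
  rw [orbitPM_eq_image_range]
  refine mem_image.2 ⟨t % K, mem_range.2 (Nat.mod_lt t hK), ?_⟩
  conv_rhs => rw [← Nat.mod_add_div t K]
  rw [Nat.cast_add, add_mul, Nat.cast_mul, mul_comm (K : ZMod M), mul_assoc, ← Nat.cast_mul K,
    Nat.mul_div_cancel' hKM, ZMod.natCast_self, mul_zero, add_zero]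

lemma card_orbitPM_le (M : ℕ) (a : ZMod M) (K : ℕ) : (orbitPM M a K).card ≤ K := by
  rw [orbitPM_eq_image_range]
  exact card_image_le.trans (card_range K).le

section ProdErase

variable {ι : Type*} [Fintype ι] [DecidableEq ι] {p : ι → ℕ}

lemma sum_mul_prod_erase_modEq (m : ι → ℕ) (l : ι) :
    ∑ i, m i * ∏ i' ∈ univ.erase i, p i' ≡
      m l * ∏ i' ∈ univ.erase l, p i' [MOD p l] := by
  rw [← add_sum_erase _ _ (mem_univ l)]
  conv_rhs => rw [← add_zero (m l * _)]
  refine Nat.ModEq.add_left _ (Nat.modEq_zero_iff_dvd.2 (dvd_sum fun i hi => ?_))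
  exact dvd_mul_of_dvd_right
    (dvd_prod_of_mem _ (mem_erase.2 ⟨(ne_of_mem_erase hi).symm, mem_univ l⟩)) _

theorem eq_of_sum_mul_prod_erase_modEq (hp : Pairwise (Nat.Coprime on p))
    {m n : ∀ i, Fin (p i)}
    (h : ∑ i, (m i : ℕ) * ∏ i' ∈ univ.erase i, p i' ≡
      ∑ i, (n i : ℕ) * ∏ i' ∈ univ.erase i, p i' [MOD ∏ i, p i]) : m = n := by
  funext l
  have hl := (sum_mul_prod_erase_modEq _ l).symm.trans
    ((h.of_dvd (dvd_prod_of_mem p (mem_univ l))).trans (sum_mul_prod_erase_modEq _ l))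
  have hcop : Nat.Coprime (p l) (∏ i' ∈ univ.erase l, p i') :=
    Nat.Coprime.prod_right fun i hi => hp (ne_of_mem_erase hi).symm
  exact Fin.ext
    ((Nat.ModEq.cancel_right_of_coprime hcop hl).eq_of_lt_of_lt (m l).isLt (n l).isLt)

lemma div_eq_mul_prod_erase {M N : ℕ} (hM : N * ∏ i, p i = M) {l : ι} (hl : 0 < p l) :
    M / p l = N * ∏ i' ∈ univ.erase l, p i' := by
  refine Nat.div_eq_of_eq_mul_left hl ?_
  rw [mul_assoc, prod_erase_mul _ _ (mem_univ l), hM]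

theorem injective_mkPM_add_mul_sum_mul_prod_erase {M N : ℕ} (hM : N * ∏ i, p i = M)
    (hp : Pairwise (Nat.Coprime on p)) (hN : 2 < N) {g : ℤ} (hg : Int.gcd g N = 1) :
    Injective fun m : ∀ i, Fin (p i) =>
      mkPM M (g + N * ((∑ i, (m i : ℕ) * ∏ i' ∈ univ.erase i, p i' : ℕ) : ZMod M)) := by
  intro m n hmn
  rcases mkPM_eq_mkPM_iff.1 hmn with h | h
  · exact eq_of_sum_mul_prod_erase_modEq hp (modEq_of_add_mul_eq hM (by omega) h)
  · exact absurd (dvd_two_of_add_mul_eq_neg (Dvd.intro _ hM) hg h)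
      (fun h2 => (Nat.le_of_dvd two_pos h2).not_gt hN)

end ProdErase

/-- **Parametrization of orbits (Lemma 4.6).** Let `M` have at least two distinct prime
divisors, let `p₁, …, p_j` be distinct primes with `p_i² | M`, and let `g` be coprime to
`M`. Then the map `(m₁,…,m_j) ↦ [g + m₁·M/p₁ + ⋯ + m_j·M/p_j]`, `0 ≤ m_i ≤ p_i − 1`, is
injective with image exactly the orbit `O_{g, p₁⋯p_j}`. -/
theorem orbit_parametrization (M : ℕ) (hM : 2 ≤ M.primeFactors.card)
    (j : ℕ) (p : Fin j → ℕ) (hp : ∀ i, (p i).Prime) (hpinj : Function.Injective p)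
    (hsq : ∀ i, p i ^ 2 ∣ M) (g : ℤ) (hg : Int.gcd g M = 1) :
    Function.Injective
        (fun m : (∀ i : Fin j, Fin (p i)) =>
          mkPM M ((g : ZMod M) + ∑ i, ((m i : ℕ) : ZMod M) * ((M / p i : ℕ) : ZMod M))) ∧
      Set.range
          (fun m : (∀ i : Fin j, Fin (p i)) =>
            mkPM M ((g : ZMod M) + ∑ i, ((m i : ℕ) : ZMod M) * ((M / p i : ℕ) : ZMod M))) =
        ↑(orbitPM M (g : ZMod M) (∏ i, p i)) := by
  set K := ∏ i, p i
  set N := M / K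
  have hcop : Pairwise (Nat.Coprime on p) :=
    fun i i' h => (Nat.coprime_primes (hp i) (hp i')).2 (hpinj.ne h)
  have hKK : K * K ∣ M := by
    rw [← sq, ← prod_pow]
    exact Nat.prod_dvd_of_coprime (fun i i' h => (hcop h).pow 2 2) hsq
  have hNK : N * K = M := Nat.div_mul_cancel (dvd_of_mul_left_dvd (hKK))
  have hN := two_lt_of_mul_eq_of_dvd hNK (Nat.dvd_div_of_mul_dvd (hKK)) hM
  have hsum (m : ∀ i, Fin (p i)) : ∑ i, ((m i : ℕ) : ZMod M) * ((M / p i : ℕ) : ZMod M) =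
      N * ((∑ i, (m i : ℕ) * ∏ i' ∈ univ.erase i, p i' : ℕ) : ZMod M) := by
    simp only [div_eq_mul_prod_erase hNK (hp _).pos, Nat.cast_sum, Nat.cast_mul, mul_sum]
    exact sum_congr rfl fun i _ => by ring
  have hinj := injective_mkPM_add_mul_sum_mul_prod_erase hNK hcop hN
    (Nat.Coprime.coprime_dvd_right (Dvd.intro K hNK) hg)
  simp only [← hsum] at hinj
  refine ⟨hinj, range_eq_of_injective_of_card_le hinj (fun m => ?_) ?_⟩
  · rw [hsum, mul_comm]
    exact mkPM_add_mul_mem_orbitPM (prod_pos fun i _ => (hp i).pos) (Dvd.intro_left N hNK) _ _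
  · simpa [Fintype.card_pi] using card_orbitPM_le M g K
end
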